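/- Let (Ω,μ) be a measure space, f a measurable function on Ω, and C > 0. If ∫_t^∞ λ_f(s) ds ≤ C λ_f(t) for all t > 0, then f**(t) − f*(t) ≤ C for all t > 0. -/

import Mathlib

open MeasureTheory Set
open scoped ENNReal NNReal

noncomputable section

/-- The distribution function `λ_f(t) = μ {x : |f(x)| > t}`. -/
def distFun {α : Type*} [MeasurableSpace α] (μ : Measure α) (f : α → ℝ) (t : ℝ) : ℝ≥0∞ :=
  μ {x | t < |f x|}

/-- The non-increasing rearrangement `f*(t) = inf {s > 0 : λ_f(s) ≤ t}`. -/
def rearr {α : Type*} [MeasurableSpace α] (μ : Measure α) (f : α → ℝ) (t : ℝ) : ℝ≥0∞ :=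
  sInf (ENNReal.ofReal '' {s : ℝ | 0 < s ∧ distFun μ f s ≤ ENNReal.ofReal t})

/-- The maximal function `f**(t) = (1/t) ∫₀ᵗ f*(s) ds`. -/
def dstar {α : Type*} [MeasurableSpace α] (μ : Measure α) (f : α → ℝ) (t : ℝ) : ℝ≥0∞ :=
  (∫⁻ s in Set.Ioc (0 : ℝ) t, rearr μ f s) / ENNReal.ofReal t

/-- The `L(∞,∞)` "norm" : `sup_{t>0} (f**(t) - f*(t))`. -/
def oscNorm {α : Type*} [MeasurableSpace α] (μ : Measure α) (f : α → ℝ) : ℝ≥0∞ :=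
  ⨆ (t : ℝ) (_ : 0 < t), dstar μ f t - rearr μ f t

/-- The Marcinkiewicz `L(p,∞)` quasinorm `‖f‖*_{L(p,∞)} = sup_{t>0} t (λ_f(t))^{1/p}`. -/
def wkNorm {α : Type*} [MeasurableSpace α] (μ : Measure α) (p : ℝ) (f : α → ℝ) : ℝ≥0∞ :=
  ⨆ (t : ℝ) (_ : 0 < t), ENNReal.ofReal t * distFun μ f t ^ (1 / p)

/-- `‖f‖_{L(p,∞)} = sup_{s>0} s^{1/p} f**(s)`. -/
def wkNormStarStar {α : Type*} [MeasurableSpace α] (μ : Measure α) (p : ℝ) (f : α → ℝ) : ℝ≥0∞ :=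
  ⨆ (s : ℝ) (_ : 0 < s), ENNReal.ofReal s ^ (1 / p) * dstar μ f s

/-- `‖f‖*_{L(p,∞)} = sup_{s>0} s^{1/p} f*(s)` (rearrangement form). -/
def wkNormStar {α : Type*} [MeasurableSpace α] (μ : Measure α) (p : ℝ) (f : α → ℝ) : ℝ≥0∞ :=
  ⨆ (s : ℝ) (_ : 0 < s), ENNReal.ofReal s ^ (1 / p) * rearr μ f s

/-- `‖f‖^#_{L(p,∞)} = sup_{s>0} s^{1/p} (f**(s) - f*(s))`. -/
def sharpNorm {α : Type*} [MeasurableSpace α] (μ : Measure α) (p : ℝ) (f : α → ℝ) : ℝ≥0∞ :=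
  ⨆ (s : ℝ) (_ : 0 < s), ENNReal.ofReal s ^ (1 / p) * (dstar μ f s - rearr μ f s)

/-- `‖f‖^{##}_{L(p,∞)} = sup_{t>0} (λ_f(t))^{-(1-1/p)} ∫_t^∞ λ_f(s) ds`. -/
def sharpSharpNorm {α : Type*} [MeasurableSpace α] (μ : Measure α) (p : ℝ) (f : α → ℝ) : ℝ≥0∞ :=
  ⨆ (t : ℝ) (_ : 0 < t),
    distFun μ f t ^ (-(1 - 1 / p)) * ∫⁻ s in Set.Ioi t, distFun μ f s

/-- `‖f‖^{##}_{L(∞,∞)} = inf {C : ∫_t^∞ λ_f(s) ds ≤ C λ_f(t) for all t > 0}`. -/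
def sharpSharpInf {α : Type*} [MeasurableSpace α] (μ : Measure α) (f : α → ℝ) : ℝ≥0∞ :=
  sInf {C : ℝ≥0∞ | ∀ t : ℝ, 0 < t →
    ∫⁻ s in Set.Ioi t, distFun μ f s ≤ C * distFun μ f t}

/-- O'Neil's quantity `inf {C^{1/p} : ∫_t^∞ λ_f(s) ds ≤ C t^{1-p} for all t > 0}`. -/
def oneilQuantity {α : Type*} [MeasurableSpace α] (μ : Measure α) (p : ℝ) (f : α → ℝ) : ℝ≥0∞ :=
  sInf {D : ℝ≥0∞ | ∃ C : ℝ≥0∞, D = C ^ (1 / p) ∧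
    ∀ t : ℝ, 0 < t → ∫⁻ s in Set.Ioi t, distFun μ f s ≤ C * ENNReal.ofReal t ^ (1 - p)}

/-- A cube in `ℝⁿ` with sides parallel to the coordinate axes. -/
def IsCube {n : ℕ} (Q : Set (Fin n → ℝ)) : Prop :=
  ∃ (a : Fin n → ℝ) (l : ℝ), 0 < l ∧ Q = Set.univ.pi fun i => Set.Icc (a i) (a i + l)

/-- A countable family of subcubes of `Q₀` with pairwise disjoint interiors. -/
def IsPackingIn {n : ℕ} (Q₀ : Set (Fin n → ℝ)) (Q : ℕ → Set (Fin n → ℝ)) : Prop :=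
  (∀ i, IsCube (Q i) ∧ Q i ⊆ Q₀) ∧
    Pairwise fun i j => interior (Q i) ∩ interior (Q j) = ∅

/-- The average `f_Q = (1/|Q|) ∫_Q f`. -/
def cubeAvg {n : ℕ} (f : (Fin n → ℝ) → ℝ) (Q : Set (Fin n → ℝ)) : ℝ :=
  ⨍ x in Q, f x

/-- The mean oscillation `(1/|Q|) ∫_Q |f - f_Q|`. -/
def meanOsc {n : ℕ} (f : (Fin n → ℝ) → ℝ) (Q : Set (Fin n → ℝ)) : ℝ :=
  ⨍ x in Q, |f x - cubeAvg f Q|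

/-- The John–Nirenberg functional `JN_p(f,Q₀)`. -/
def JN {n : ℕ} (p : ℝ) (f : (Fin n → ℝ) → ℝ) (Q₀ : Set (Fin n → ℝ)) : ℝ≥0∞ :=
  ⨆ (Q : ℕ → Set (Fin n → ℝ)) (_ : IsPackingIn Q₀ Q),
    (∑' i, volume (Q i) * ENNReal.ofReal (meanOsc f (Q i)) ^ p) ^ (1 / p)

/-- The BMO norm `‖f‖_{BMO(Q₀)}`. -/
def bmoNorm {n : ℕ} (f : (Fin n → ℝ) → ℝ) (Q₀ : Set (Fin n → ℝ)) : ℝ≥0∞ :=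
  ⨆ (Q : Set (Fin n → ℝ)) (_ : IsCube Q ∧ Q ⊆ Q₀), ENNReal.ofReal (meanOsc f Q)

/-- The Garsia–Rodemich functional `GaRo_p(f,Q₀)`: the least constant `C` such that
for every packing `{Qᵢ}` of `Q₀`,
`Σᵢ (1/|Qᵢ|) ∫_{Qᵢ}∫_{Qᵢ} |f(x)-f(y)| dx dy ≤ C (Σᵢ |Qᵢ|)^{1/p'}` where `1/p' = 1 - 1/p`. -/
def GaRo {n : ℕ} (p : ℝ) (f : (Fin n → ℝ) → ℝ) (Q₀ : Set (Fin n → ℝ)) : ℝ≥0∞ :=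
  sInf {C : ℝ≥0∞ | ∀ Q : ℕ → Set (Fin n → ℝ), IsPackingIn Q₀ Q →
    (∑' i, (volume (Q i))⁻¹ *
        ∫⁻ x in Q i, ∫⁻ y in Q i, ENNReal.ofReal |f x - f y|) ≤
      C * (∑' i, volume (Q i)) ^ (1 - 1 / p)}

/-! With `a = f*(t)`, Tonelli gives `∫₀ᵗ (f*(s) - a) ds ≤ ∫ₐ^∞ λ_f(y) dy`, and since
`λ_f(y) ≤ t` for every `y > a`, the hypothesis at the points `b > a` bounds the tail integral by
`C t`. Hence `t f**(t) = t a + ∫₀ᵗ (f*(s) - a) ds ≤ t (a + C)`. -/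

lemma volume_Ioi_inter_ofReal_preimage_Iio {a : ℝ} (ha : 0 ≤ a) (b : ℝ≥0∞) :
    volume (Ioi a ∩ ENNReal.ofReal ⁻¹' Iio b) = b - ENNReal.ofReal a := by
  rcases eq_or_ne b ∞ with rfl | hb
  · have : ENNReal.ofReal ⁻¹' Iio ∞ = univ := eq_univ_of_forall fun _ => ENNReal.ofReal_lt_top
    rw [this, inter_univ, Real.volume_Ioi, ENNReal.top_sub ENNReal.ofReal_ne_top]
  · have : Ioi a ∩ ENNReal.ofReal ⁻¹' Iio b = Ioo a b.toReal := by
      ext y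
      exact and_congr_right fun hy => ENNReal.ofReal_lt_iff_lt_toReal (ha.trans hy.le) hb
    rw [this, Real.volume_Ioo, ENNReal.ofReal_sub _ ha, ENNReal.ofReal_toReal hb]

lemma setLIntegral_Ioi_le_of_forall_lt {g : ℝ → ℝ≥0∞} {a : ℝ} {c : ℝ≥0∞}
    (h : ∀ b, a < b → ∫⁻ x in Ioi b, g x ≤ c) : ∫⁻ x in Ioi a, g x ≤ c := by
  obtain ⟨u, hu_anti, hu_gt, hu_lim⟩ := exists_seq_strictAnti_tendsto a
  rw [← (isGLB_of_tendsto_atTop hu_anti.antitone hu_lim).iUnion_Ioi_eq,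
    setLIntegral_iUnion_of_directed _ (Monotone.directed_le fun m n hmn =>
      Ioi_subset_Ioi (hu_anti.antitone hmn))]
  exact iSup_le fun n => h _ (hu_gt n)

lemma Antitone.setLIntegral_Ioc_eq_add_sub {g : ℝ → ℝ≥0∞} (hg : Antitone g) (t : ℝ) :
    ∫⁻ s in Ioc 0 t, g s = ENNReal.ofReal t * g t + ∫⁻ s in Ioc 0 t, (g s - g t) := by
  have hsplit : ∀ s ∈ Ioc 0 t, g s = g t + (g s - g t) := fun s hs =>
    (add_tsub_cancel_of_le (hg hs.2)).symm
  rw [setLIntegral_congr_fun measurableSet_Ioc hsplit, lintegral_add_left measurable_const,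
    setLIntegral_const, Real.volume_Ioc, sub_zero, mul_comm]

section Rearrangement

variable {α : Type*} [MeasurableSpace α] (μ : Measure α) (f : α → ℝ)

lemma distFun_antitone : Antitone (distFun μ f) := fun _ _ hst =>
  measure_mono fun _ hx => hst.trans_lt hx

lemma rearr_antitone : Antitone (rearr μ f) := fun _ _ hst =>
  sInf_le_sInf <| image_mono fun _ hu => ⟨hu.1, hu.2.trans (ENNReal.ofReal_le_ofReal hst)⟩

lemma ofReal_lt_distFun_of_ofReal_lt_rearr {t y : ℝ} (hy : 0 < y)
    (hlt : ENNReal.ofReal y < rearr μ f t) : ENNReal.ofReal t < distFun μ f y := by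
  by_contra! hle
  exact hlt.not_ge <| sInf_le ⟨y, ⟨hy, hle⟩, rfl⟩

lemma distFun_le_of_rearr_lt_ofReal {t y : ℝ} (hlt : rearr μ f t < ENNReal.ofReal y) :
    distFun μ f y ≤ ENNReal.ofReal t := by
  obtain ⟨_, ⟨u, ⟨-, hu⟩, rfl⟩, huy⟩ := sInf_lt_iff.1 hlt
  exact (distFun_antitone μ f (ENNReal.ofReal_lt_ofReal_iff'.1 huy).1.le).trans hu

/-- Tonelli on `{(s, y) | f*(t) < y, y < f*(s)}`, whose vertical slices have measure
`f*(s) - f*(t)` and whose horizontal slices lie in `{s | s < λ_f(y)}`. -/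
lemma lintegral_rearr_sub_le {t : ℝ} (ht : rearr μ f t ≠ ∞) :
    ∫⁻ s in Ioc 0 t, (rearr μ f s - rearr μ f t) ≤
      ∫⁻ y in Ioi (rearr μ f t).toReal, distFun μ f y := by
  set a := (rearr μ f t).toReal
  let E : Set (ℝ × ℝ) := {p | a < p.2 ∧ ENNReal.ofReal p.2 < rearr μ f p.1}
  have hE : MeasurableSet E := (measurableSet_lt measurable_const measurable_snd).inter
    (measurableSet_lt (ENNReal.measurable_ofReal.comp measurable_snd)
      ((rearr_antitone μ f).measurable.comp measurable_fst))
  have hslice : ∀ y, (volume.restrict (Ioc 0 t)) ((·, y) ⁻¹' E) ≤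
      (Ioi a).indicator (distFun μ f) y := by
    intro y
    by_cases hy : a < y
    · rw [indicator_of_mem (mem_Ioi.2 hy), Measure.restrict_apply' measurableSet_Ioc]
      calc volume ((·, y) ⁻¹' E ∩ Ioc 0 t)
          ≤ volume (Ioi 0 ∩ ENNReal.ofReal ⁻¹' Iio (distFun μ f y)) :=
            measure_mono fun s ⟨⟨_, hs⟩, hs0, _⟩ =>
              ⟨hs0, ofReal_lt_distFun_of_ofReal_lt_rearr μ f
                (ENNReal.toReal_nonneg.trans_lt hy) hs⟩
        _ = distFun μ f y := by
            rw [volume_Ioi_inter_ofReal_preimage_Iio le_rfl, ENNReal.ofReal_zero, tsub_zero]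
    · have hempty : (·, y) ⁻¹' E = ∅ := eq_empty_of_forall_notMem fun _ hs => hy hs.1
      rw [hempty, measure_empty]
      exact zero_le
  calc ∫⁻ s in Ioc 0 t, (rearr μ f s - rearr μ f t)
      = ∫⁻ s in Ioc 0 t, volume (Prod.mk s ⁻¹' E) := by
        refine lintegral_congr fun s => ?_
        rw [← ENNReal.ofReal_toReal ht,
          ← volume_Ioi_inter_ofReal_preimage_Iio ENNReal.toReal_nonneg]
        rfl
    _ = ∫⁻ y, (volume.restrict (Ioc 0 t)) ((·, y) ⁻¹' E) := by
        rw [← Measure.prod_apply hE, Measure.prod_apply_symm hE]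
    _ ≤ ∫⁻ y, (Ioi a).indicator (distFun μ f) y := lintegral_mono hslice
    _ = ∫⁻ y in Ioi a, distFun μ f y := lintegral_indicator measurableSet_Ioi _

end Rearrangement

theorem osc_le_of_distFun_bound_general {α : Type*} [MeasurableSpace α] (μ : Measure α)
    (f : α → ℝ) (C : ℝ)
    (h : ∀ t : ℝ, 0 < t →
      ∫⁻ s in Set.Ioi t, distFun μ f s ≤ ENNReal.ofReal C * distFun μ f t) :
    ∀ t : ℝ, 0 < t → dstar μ f t - rearr μ f t ≤ ENNReal.ofReal C := by
  intro t ht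
  rcases eq_or_ne (rearr μ f t) ∞ with hinf | hfin
  · simp [hinf]
  have htail : ∫⁻ y in Ioi (rearr μ f t).toReal, distFun μ f y ≤
      ENNReal.ofReal C * ENNReal.ofReal t := by
    refine setLIntegral_Ioi_le_of_forall_lt fun b hb => ?_
    have hb0 : 0 < b := ENNReal.toReal_nonneg.trans_lt hb
    refine (h b hb0).trans (mul_le_mul_right (distFun_le_of_rearr_lt_ofReal μ f ?_) _)
    rwa [← ENNReal.ofReal_toReal hfin, ENNReal.ofReal_lt_ofReal_iff hb0]
  rw [tsub_le_iff_right, dstar, ENNReal.div_le_iff (by simpa using ht) ENNReal.ofReal_ne_top]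
  calc ∫⁻ s in Ioc 0 t, rearr μ f s
      = ENNReal.ofReal t * rearr μ f t + ∫⁻ s in Ioc 0 t, (rearr μ f s - rearr μ f t) :=
        (rearr_antitone μ f).setLIntegral_Ioc_eq_add_sub t
    _ ≤ ENNReal.ofReal t * rearr μ f t + ENNReal.ofReal C * ENNReal.ofReal t := by
        gcongr
        exact (lintegral_rearr_sub_le μ f hfin).trans htail
    _ = (ENNReal.ofReal C + rearr μ f t) * ENNReal.ofReal t := by ring

/-- if `∫_t^∞ λ_f(s) ds ≤ C λ_f(t)` for all `t > 0`, then
`f**(t) - f*(t) ≤ C` for all `t > 0`. -/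
theorem osc_le_of_distFun_bound {α : Type*} [MeasurableSpace α] (μ : Measure α)
    (f : α → ℝ) (hf : Measurable f) (C : ℝ) (hC : 0 < C)
    (h : ∀ t : ℝ, 0 < t →
      ∫⁻ s in Set.Ioi t, distFun μ f s ≤ ENNReal.ofReal C * distFun μ f t) :
    ∀ t : ℝ, 0 < t → dstar μ f t - rearr μ f t ≤ ENNReal.ofReal C :=
  osc_le_of_distFun_bound_general μ f C h
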